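/- In the S-subdivision C_ν of a d-simplex ν, for every vertex v of the distinguished simplex Ω_{2(d+1)+1}, the star of v in C_ν contains no vertex of the original vertex set U; that is, star_{C_ν}(v) ∩ U = ∅. -/

import Mathlib

namespace ArxivCut

noncomputable section

attribute [local instance] Classical.propDecidable

open Finset

/-! ### The S-subdivision of a `d`-simplex -/

/-- The vertices occurring in the S-subdivision of a `d`-simplex: the `d + 1` original
vertices of `ν` (inl) and the `2(d+1)` new vertices `v₁, …, v_{2(d+1)}` (inr). -/
abbrev SVert (d : ℕ) := Fin (d + 1) ⊕ Fin (2 * (d + 1))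

/-- The rank of a vertex, encoding the total order `≻`: the original vertices of `U` come
first (in their given order) and each newly introduced vertex is higher than all previous
ones.  `x ≻ y` means `rank x > rank y`. -/
def rank (d : ℕ) : SVert d → ℕ := Sum.elim Fin.val fun j => (d + 1) + j.val

/-- The key of a set of vertices: comparing keys is exactly the lexicographic comparison
of the decreasingly `≻`-sorted vertex lists (longer prefixes being higher). -/
def key (d : ℕ) (s : Finset (SVert d)) : ℕ := ∑ x ∈ s, 2 ^ rank d x

/-- The lexicographically highest `d`-simplex of the complex `C` (a complex being recorded
by its set of `d`-simplices). -/
def lexTop (d : ℕ) (C : Finset (Finset (SVert d))) : Finset (SVert d) :=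
  if h : C.Nonempty then (Finset.exists_max_image C (key d) h).choose else ∅

/-- Stellar subdivision of the `d`-simplex `Ω` inside `C` with new apex vertex `v`:
`Ω` is removed and replaced by the cone with apex `v` over the boundary of `Ω`. -/
def stellar (d : ℕ) (C : Finset (Finset (SVert d))) (Ω : Finset (SVert d))
    (v : SVert d) : Finset (Finset (SVert d)) :=
  C.erase Ω ∪ Ω.image fun w => insert v (Ω.erase w)

/-- The new vertex introduced at the `(i+1)`-st iteration (`i = 0, …, 2(d+1) − 1`). -/
def newV (d : ℕ) (i : ℕ) : SVert d :=
  if h : i < 2 * (d + 1) then Sum.inr ⟨i, h⟩ else Sum.inl ⟨0, Nat.succ_pos d⟩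

/-- The original `d`-simplex `ν`, on the vertex set `U`. -/
def baseS (d : ℕ) : Finset (SVert d) := Finset.univ.image Sum.inl

/-- The S-subdivision sequence: `(CΩ d i).1 = C_i` (the set of `d`-simplices of the `i`-th
complex) and `(CΩ d i).2 = Ω_{i+1}` (the `d`-simplex to be subdivided next, i.e. the
lexicographically highest `d`-simplex of `C_i`; for `i = 0` it is `Ω₁ = ν`).
The S-subdivision of `ν` is `C_ν = (CΩ d (2*(d+1))).1`, and
`Ω_{2(d+1)+1} = (CΩ d (2*(d+1))).2`. -/
def CΩ (d : ℕ) : ℕ → Finset (Finset (SVert d)) × Finset (SVert d)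
  | 0 => ({baseS d}, baseS d)
  | (i + 1) =>
      let p := CΩ d i
      let C' := stellar d p.1 p.2 (newV d i)
      (C', lexTop d C')

/-- The vertices of a complex recorded by its set of `d`-simplices. -/
def vertsOf (d : ℕ) (C : Finset (Finset (SVert d))) : Finset (SVert d) :=
  C.biUnion id

/-- The `n` `≻`-highest vertices of the complex `C`: those vertices with fewer than `n`
vertices of `C` strictly above them. -/
def highVerts (d : ℕ) (C : Finset (Finset (SVert d))) (n : ℕ) : Finset (SVert d) :=
  (vertsOf d C).filter fun x => ((vertsOf d C).filter fun y => rank d x < rank d y).card < n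

/-! Ranks `0, …, 3d + 2` number the vertices bijectively, and the whole subdivision process is
controlled by them: `Ω_{i+1}` is the window of the `d + 1` consecutive ranks `i, …, i + d`.
Subdividing it adds the vertex of rank `i + d + 1`, and the new simplex of highest key drops
the lowest vertex of the window, so the window slides up by one. Every simplex created along
the way lies in a window `i, …, i + d + 1`, hence spans at most `d + 2` consecutive ranks,
while the vertices of `Ω_{2(d+1)+1}` have rank at least `2(d+1)` and those of `U` at most `d`. -/

lemma rank_injective (d : ℕ) : Function.Injective (rank d) := by
  rintro (x | j) (y | k) h <;> simp only [rank, Sum.elim_inl, Sum.elim_inr] at h <;>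
    grind [Fin.isLt]

lemma exists_rank_eq {d n : ℕ} (hn : n < 3 * (d + 1)) : ∃ z : SVert d, rank d z = n := by
  by_cases h : n < d + 1
  · exact ⟨Sum.inl ⟨n, h⟩, rfl⟩
  · exact ⟨Sum.inr ⟨n - (d + 1), by omega⟩, by simp only [rank, Sum.elim_inr]; omega⟩

lemma rank_newV {d i : ℕ} (hi : i < 2 * (d + 1)) : rank d (newV d i) = i + (d + 1) := by
  simp only [newV, hi, dite_true, rank, Sum.elim_inr]
  omega

lemma rank_inl_le {d : ℕ} (x : Fin (d + 1)) : rank d (Sum.inl x) ≤ d :=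
  Nat.lt_succ_iff.1 x.isLt

def window (d i : ℕ) : Finset (SVert d) :=
  univ.filter fun z => i ≤ rank d z ∧ rank d z < i + (d + 1)

lemma mem_window {d i : ℕ} {z : SVert d} :
    z ∈ window d i ↔ i ≤ rank d z ∧ rank d z < i + (d + 1) := by
  simp [window]

lemma baseS_eq_window_zero (d : ℕ) : baseS d = window d 0 := by
  ext (x | j) <;> simp [baseS, mem_window, rank] <;> omega

lemma insert_newV_erase_window {d i : ℕ} (hi : i < 2 * (d + 1)) {m : SVert d}
    (hm : rank d m = i) : insert (newV d i) ((window d i).erase m) = window d (i + 1) := by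
  ext z
  simp only [mem_insert, mem_erase, mem_window, ne_eq, ← (rank_injective d).eq_iff, rank_newV hi]
  omega

lemma key_lt_two_pow {d r : ℕ} {s : Finset (SVert d)} (h : ∀ z ∈ s, rank d z < r) :
    key d s < 2 ^ r := by
  rw [key, ← sum_image fun x _ y _ hxy => rank_injective d hxy]
  exact Nat.geomSum_lt le_rfl (forall_mem_image.2 h)

lemma two_pow_rank_le_key {d : ℕ} {s : Finset (SVert d)} {z : SVert d} (hz : z ∈ s) :
    2 ^ rank d z ≤ key d s :=
  single_le_sum (f := fun x => 2 ^ rank d x) (fun _ _ => Nat.zero_le _) hz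

lemma key_insert_erase_le_iff {d : ℕ} {Ω : Finset (SVert d)} {v w w' : SVert d}
    (hv : v ∉ Ω) (hw : w ∈ Ω) (hw' : w' ∈ Ω) :
    key d (insert v (Ω.erase w)) ≤ key d (insert v (Ω.erase w')) ↔ rank d w' ≤ rank d w := by
  have hkey : ∀ u ∈ Ω,
      key d (insert v (Ω.erase u)) + 2 ^ rank d u = 2 ^ rank d v + key d Ω := fun u hu => by
    rw [key, sum_insert fun h => hv (mem_of_mem_erase h), add_assoc, sum_erase_add _ _ hu]
    rfl
  have := hkey w hw
  have := hkey w' hw'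
  rw [← Nat.pow_le_pow_iff_right (a := 2) (n := rank d w') (m := rank d w) one_lt_two]
  omega

lemma mem_stellar {d : ℕ} {C : Finset (Finset (SVert d))} {Ω s : Finset (SVert d)}
    {v : SVert d} :
    s ∈ stellar d C Ω v ↔ (s ∈ C ∧ s ≠ Ω) ∨ ∃ w ∈ Ω, insert v (Ω.erase w) = s := by
  simp [stellar, and_comm]

lemma lexTop_spec {d : ℕ} {C : Finset (Finset (SVert d))} (h : C.Nonempty) :
    lexTop d C ∈ C ∧ ∀ t ∈ C, key d t ≤ key d (lexTop d C) := by
  rw [lexTop, dif_pos h]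
  exact (exists_max_image C (key d) h).choose_spec

lemma lexTop_stellar_window {d i : ℕ} (hi : i < 2 * (d + 1)) {C : Finset (Finset (SVert d))}
    (hC : ∀ s ∈ C, ∀ z ∈ s, rank d z < i + (d + 1)) :
    lexTop d (stellar d C (window d i) (newV d i)) = window d (i + 1) := by
  obtain ⟨m, hm⟩ := exists_rank_eq (d := d) (n := i) (by omega)
  have hmΩ : m ∈ window d i := mem_window.2 (by omega)
  have hvΩ : newV d i ∉ window d i := by simp [mem_window, rank_newV hi]
  have hcone : window d (i + 1) ∈ stellar d C (window d i) (newV d i) :=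
    mem_stellar.2 (Or.inr ⟨m, hmΩ, insert_newV_erase_window hi hm⟩)
  obtain ⟨htop, hmax⟩ := lexTop_spec ⟨_, hcone⟩
  have hle := hmax _ hcone
  rcases mem_stellar.1 htop with ⟨hold, -⟩ | ⟨w, hw, htop_eq⟩
  · have hlt := key_lt_two_pow (hC _ hold)
    have hge := two_pow_rank_le_key (mem_insert_self (newV d i) ((window d i).erase m))
    rw [rank_newV hi, insert_newV_erase_window hi hm] at hge
    omega
  · rw [← htop_eq, ← insert_newV_erase_window hi hm,
      key_insert_erase_le_iff hvΩ hmΩ hw] at hle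
    have hwm : w = m := rank_injective d (by have := (mem_window.1 hw).1; omega)
    rw [← htop_eq, hwm, insert_newV_erase_window hi hm]

lemma CΩ_spec {d i : ℕ} (hi : i ≤ 2 * (d + 1)) :
    (CΩ d i).2 = window d i ∧
      ∀ s ∈ (CΩ d i).1, ∀ z ∈ s,
        rank d z < i + (d + 1) ∧ ∀ y ∈ s, rank d z ≤ rank d y + (d + 1) := by
  induction i with
  | zero =>
    refine ⟨baseS_eq_window_zero d, fun s hs z hz => ?_⟩
    obtain rfl := mem_singleton.1 hs
    rw [baseS_eq_window_zero] at hz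
    have := mem_window.1 hz
    exact ⟨by omega, fun y _ => by omega⟩
  | succ i ih =>
    obtain ⟨hΩ, hC⟩ := ih (by omega)
    have hstep : CΩ d (i + 1) = (stellar d (CΩ d i).1 (window d i) (newV d i),
        lexTop d (stellar d (CΩ d i).1 (window d i) (newV d i))) := by
      rw [CΩ, hΩ]
    rw [hstep]
    refine ⟨lexTop_stellar_window (by omega) fun s hs z hz => (hC s hs z hz).1, ?_⟩
    intro s hs z hz
    rcases mem_stellar.1 hs with ⟨hold, -⟩ | ⟨w, -, rfl⟩
    · exact ⟨by have := (hC s hold z hz).1; omega, (hC s hold z hz).2⟩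
    · have hrank : ∀ y ∈ insert (newV d i) ((window d i).erase w),
          i ≤ rank d y ∧ rank d y ≤ i + (d + 1) := by
        intro y hy
        rcases mem_insert.1 hy with rfl | hy
        · rw [rank_newV (by omega)]; omega
        · have := mem_window.1 (mem_of_mem_erase hy); omega
      have := hrank z hz
      exact ⟨by omega, fun y hy => by have := hrank y hy; omega⟩

theorem statement19_general (d : ℕ) (v : SVert d)
    (hv : v ∈ (CΩ d (2 * (d + 1))).2) :
    ∀ s ∈ (CΩ d (2 * (d + 1))).1, v ∈ s → ∀ x : Fin (d + 1), Sum.inl x ∉ s := by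
  obtain ⟨hΩ, hC⟩ := CΩ_spec (le_refl (2 * (d + 1)))
  intro s hs hvs x hxs
  have hv_high := (mem_window.1 (hΩ ▸ hv)).1
  have hspan := (hC s hs v hvs).2 _ hxs
  have hx_low := rank_inl_le x
  omega

/-- In the S-subdivision `C_ν` of a `d`-simplex `ν`, for every vertex
`v` of the distinguished simplex `Ω_{2(d+1)+1}`, the star of `v` in `C_ν` contains no
vertex of the original vertex set `U`: no `d`-simplex of `C_ν` containing `v` contains a
vertex of `U`. -/
theorem statement19 (d : ℕ) (hd : 1 ≤ d) (v : SVert d)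
    (hv : v ∈ (CΩ d (2 * (d + 1))).2) :
    ∀ s ∈ (CΩ d (2 * (d + 1))).1, v ∈ s → ∀ x : Fin (d + 1), Sum.inl x ∉ s :=
  statement19_general d v hv

end

end ArxivCut
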